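/- arXiv:1608.08031 — 3 statements merged into one kernel-verified Lean document; each statement's English description precedes it below -/
import Mathlib

section
/- Saddle point solves dual exchange problem: Under the KKT conditions (I-W)x* = 0, 1ᵀy* = 0, y* ∈ ∂f(x*), the point y* minimizes the Fenchel conjugate f*(y) over the set {y ∈ ℝ^m : 1ᵀy = 0}. -/
open Matrix

/-!
The duality pairing `xs ⬝ᵥ y` vanishes on the whole hyperplane `1 ⬝ᵥ y = 0`, because the primal
condition forces `xs` to be a constant vector. Fenchel–Young holds with equality at the subgradient
`ys ∈ ∂f(xs)`, so `f* ys = xs ⬝ᵥ ys - f xs = -f xs`, while `f* y ≥ xs ⬝ᵥ y - f xs = -f xs` for every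
`y` on the hyperplane.
-/

section FenchelConjugate

variable {ι : Type*} [Fintype ι]

/-- The Fenchel conjugate, valued in `EReal` so that it is defined also where it is infinite. -/
noncomputable def fenchelConj (f : (ι → ℝ) → ℝ) (y : ι → ℝ) : EReal :=
  ⨆ x : ι → ℝ, ((x ⬝ᵥ y - f x : ℝ) : EReal)

theorem le_fenchelConj (f : (ι → ℝ) → ℝ) (x y : ι → ℝ) :
    ((x ⬝ᵥ y - f x : ℝ) : EReal) ≤ fenchelConj f y :=
  le_iSup (fun x : ι → ℝ => ((x ⬝ᵥ y - f x : ℝ) : EReal)) x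

theorem fenchelConj_le_of_subgradient {f : (ι → ℝ) → ℝ} {xs ys : ι → ℝ}
    (hsub : ∀ z, f z ≥ f xs + ys ⬝ᵥ (z - xs)) :
    fenchelConj f ys ≤ ((xs ⬝ᵥ ys - f xs : ℝ) : EReal) := by
  refine iSup_le fun x => EReal.coe_le_coe_iff.mpr ?_
  have hx := hsub x
  rw [dotProduct_comm, sub_dotProduct] at hx
  linarith

theorem fenchelConj_le_of_subgradient_of_dotProduct_eq {f : (ι → ℝ) → ℝ} {xs ys y : ι → ℝ}
    (hsub : ∀ z, f z ≥ f xs + ys ⬝ᵥ (z - xs)) (hy : xs ⬝ᵥ y = xs ⬝ᵥ ys) :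
    fenchelConj f ys ≤ fenchelConj f y := by
  calc fenchelConj f ys ≤ ((xs ⬝ᵥ ys - f xs : ℝ) : EReal) := fenchelConj_le_of_subgradient hsub
    _ = ((xs ⬝ᵥ y - f xs : ℝ) : EReal) := by rw [hy]
    _ ≤ fenchelConj f y := le_fenchelConj f xs y

end FenchelConjugate

theorem const_dotProduct_eq_zero {ι : Type*} [Fintype ι] (c : ℝ) {v : ι → ℝ}
    (hv : (fun _ => (1 : ℝ)) ⬝ᵥ v = 0) : (fun _ => c) ⬝ᵥ v = 0 := by
  simp only [dotProduct, one_mul] at hv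
  simp only [dotProduct, ← Finset.mul_sum, hv, mul_zero]

theorem stmt_12_general (m : ℕ) (f : (Fin m → ℝ) → ℝ)
    (W : Matrix (Fin m) (Fin m) ℝ)
    (hker : ∀ v : Fin m → ℝ, (1 - W).mulVec v = 0 ↔ ∃ c : ℝ, v = fun _ => c)
    (fconj : (Fin m → ℝ) → EReal)
    (hfconj : ∀ y, fconj y = ⨆ x : Fin m → ℝ, ((x ⬝ᵥ y - f x : ℝ) : EReal))
    (xs ys : Fin m → ℝ)
    (hprim : (1 - W).mulVec xs = 0)
    (hdual : (fun _ => (1:ℝ)) ⬝ᵥ ys = 0)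
    (hsub : ∀ z : Fin m → ℝ, f z ≥ f xs + ys ⬝ᵥ (z - xs)) :
    ∀ y : Fin m → ℝ, (fun _ => (1:ℝ)) ⬝ᵥ y = 0 → fconj ys ≤ fconj y := by
  intro y hy
  obtain ⟨c, rfl⟩ := (hker xs).mp hprim
  have hpairing : (fun _ => c) ⬝ᵥ y = (fun _ => c) ⬝ᵥ ys := by
    rw [const_dotProduct_eq_zero c hy, const_dotProduct_eq_zero c hdual]
  simpa only [hfconj, fenchelConj] using
    fenchelConj_le_of_subgradient_of_dotProduct_eq hsub hpairing

/-- The KKT conditions imply y* solves the dual (OEP) problem. -/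
theorem stmt_12 (m : ℕ) (f : (Fin m → ℝ) → ℝ) (hf : ConvexOn ℝ Set.univ f)
    (W : Matrix (Fin m) (Fin m) ℝ) (hsym : W.IsSymm)
    (hstoch : W.mulVec (fun _ => (1:ℝ)) = fun _ => (1:ℝ))
    (hker : ∀ v : Fin m → ℝ, (1 - W).mulVec v = 0 ↔ ∃ c : ℝ, v = fun _ => c)
    (fconj : (Fin m → ℝ) → EReal)
    (hfconj : ∀ y, fconj y = ⨆ x : Fin m → ℝ, ((x ⬝ᵥ y - f x : ℝ) : EReal))
    (xs ys : Fin m → ℝ)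
    (hprim : (1 - W).mulVec xs = 0)
    (hdual : (fun _ => (1:ℝ)) ⬝ᵥ ys = 0)
    (hsub : ∀ z : Fin m → ℝ, f z ≥ f xs + ys ⬝ᵥ (z - xs)) :
    ∀ y : Fin m → ℝ, (fun _ => (1:ℝ)) ⬝ᵥ y = 0 → fconj ys ≤ fconj y :=
  stmt_12_general m f W hker fconj hfconj xs ys hprim hdual hsub
end

section
/- Transformation identity linking dual and primal residuals: Suppose W is symmetric with W1 = 1, y_k = (I-W)y'_k and y_{k+1} = (I-W)y'_{k+1} with 1ᵀy'_k = 1ᵀy'_{k+1} = 0, and (I-W)x_{k+1} + γ(y_{k+1} - y_k) = 0. Then γ²‖y'_{k+1} - y'_k‖²_{I-W} = ‖x̃_{k+1}‖²_{I-W}, where x̃_{k+1} = (I - (1/m)11ᵀ)x_{k+1}. -/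
/-!
Since `W 1 = 1`, the matrix `A = I - W` kills constant vectors, so `A x̃ = A x = -γ A (y'₁ - y'₀)`
by the recursion. For a symmetric `A`, `A x = c • A d` forces `xᵀ A x = c² dᵀ A d`, because
`xᵀ A x = c dᵀ A x = c dᵀ (c A d)`.
-/

open Matrix

namespace Matrix

variable {n R : Type*} [Fintype n] [CommRing R]

theorem IsSymm.mulVec_dotProduct_comm {A : Matrix n n R} (hA : A.IsSymm) (u v : n → R) :
    A *ᵥ u ⬝ᵥ v = A *ᵥ v ⬝ᵥ u := by
  rw [dotProduct_comm, ← hA.eq, dotProduct_transpose_mulVec, hA.eq, dotProduct_comm]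

theorem IsSymm.mulVec_dotProduct_self_eq_of_mulVec_eq_smul {A : Matrix n n R} (hA : A.IsSymm)
    {x d : n → R} {c : R} (h : A *ᵥ x = c • A *ᵥ d) :
    A *ᵥ x ⬝ᵥ x = c ^ 2 * (A *ᵥ d ⬝ᵥ d) := by
  calc A *ᵥ x ⬝ᵥ x = c * (A *ᵥ d ⬝ᵥ x) := by rw [h, smul_dotProduct, smul_eq_mul]
    _ = c * (A *ᵥ x ⬝ᵥ d) := by rw [hA.mulVec_dotProduct_comm]
    _ = c ^ 2 * (A *ᵥ d ⬝ᵥ d) := by rw [h, smul_dotProduct, smul_eq_mul]; ring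

theorem mulVec_sub_const_of_mulVec_one_eq_zero {A : Matrix n n R}
    (hA : A *ᵥ (fun _ => 1) = 0) (x : n → R) (c : R) :
    A *ᵥ (x - fun _ => c) = A *ᵥ x := by
  have hconst : (fun _ : n => c) = c • fun _ => (1 : R) := by
    funext; simp
  rw [mulVec_sub, hconst, mulVec_smul, hA, smul_zero, sub_zero]

end Matrix

theorem stmt_16_general (m : ℕ) (W : Matrix (Fin m) (Fin m) ℝ)
    (hsym : W.IsSymm)
    (hstoch : W.mulVec (fun _ => (1:ℝ)) = fun _ => (1:ℝ))
    (γ : ℝ)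
    (yk yk1 y'k y'k1 xk1 : Fin m → ℝ)
    (hyk : yk = (1 - W).mulVec y'k)
    (hyk1 : yk1 = (1 - W).mulVec y'k1)
    (hrec : (1 - W).mulVec xk1 + γ • (yk1 - yk) = 0) :
    γ^2 * ((1 - W).mulVec (y'k1 - y'k) ⬝ᵥ (y'k1 - y'k)) =
      (1 - W).mulVec (xk1 - fun _ => ((m:ℝ)⁻¹ * ∑ i, xk1 i)) ⬝ᵥ
        (xk1 - fun _ => ((m:ℝ)⁻¹ * ∑ i, xk1 i)) := by
  have hA : (1 - W).IsSymm := isSymm_one.sub hsym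
  have hA_one : (1 - W) *ᵥ (fun _ => (1 : ℝ)) = 0 := by
    rw [sub_mulVec, one_mulVec, hstoch, sub_self]
  have hx : (1 - W) *ᵥ (xk1 - fun _ => (m : ℝ)⁻¹ * ∑ i, xk1 i) =
      (-γ) • (1 - W) *ᵥ (y'k1 - y'k) := by
    rw [mulVec_sub_const_of_mulVec_one_eq_zero hA_one, eq_neg_of_add_eq_zero_left hrec, hyk,
      hyk1, mulVec_sub, neg_smul]
  rw [hA.mulVec_dotProduct_self_eq_of_mulVec_eq_smul hx, neg_sq]

/-- Transformation identity linking dual and primal residuals. -/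
theorem stmt_16 (m : ℕ) (hm : 1 ≤ m) (W : Matrix (Fin m) (Fin m) ℝ)
    (hsym : W.IsSymm)
    (hstoch : W.mulVec (fun _ => (1:ℝ)) = fun _ => (1:ℝ))
    (γ : ℝ) (hγ : 0 < γ)
    (yk yk1 y'k y'k1 xk1 : Fin m → ℝ)
    (hyk : yk = (1 - W).mulVec y'k)
    (hyk1 : yk1 = (1 - W).mulVec y'k1)
    (hok : (fun _ => (1:ℝ)) ⬝ᵥ y'k = 0)
    (hok1 : (fun _ => (1:ℝ)) ⬝ᵥ y'k1 = 0)
    (hrec : (1 - W).mulVec xk1 + γ • (yk1 - yk) = 0) :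
    γ^2 * ((1 - W).mulVec (y'k1 - y'k) ⬝ᵥ (y'k1 - y'k)) =
      (1 - W).mulVec (xk1 - fun _ => ((m:ℝ)⁻¹ * ∑ i, xk1 i)) ⬝ᵥ
        (xk1 - fun _ => ((m:ℝ)⁻¹ * ∑ i, xk1 i)) :=
  stmt_16_general m W hsym hstoch γ yk yk1 y'k y'k1 xk1 hyk hyk1 hrec
end

section
/- Lower bound for the stochastic Lyapunov function: Let f : ℝ^m → ℝ be α-strongly convex (so Bregman distances satisfy D_{f}^{q}(u,v) ≥ (α/2)‖u-v‖²), γ > 0, and let W_k be symmetric with largest eigenvalue λ_max ∈ (0,1]. For q_{k+1} ∈ ∂(γf)(x_{k+1}) and x̄ ∈ ℝ^m, define V_{k+1} = D_{γf}^{q_{k+1}}(x̄, x_{k+1}) + ⟨W_k(x_{k+1} - x_k), x_{k+1} - x̄⟩ + (1/2)‖x_{k+1} - x_k‖²_{W_k}. Then V_{k+1} ≥ ((γα - λ_max)/2)‖x_{k+1} - x̄‖². In particular V_{k+1} > 0 whenever γ > λ_max/α and x_{k+1} ≠ x̄. -/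
open Matrix

/-!
The Bregman term is at least `(γα/2)‖x_{k+1} - x̄‖²` by strong convexity of `f`, applied to the
subgradient `γ⁻¹ q_{k+1}` of `f`. With `d = x_{k+1} - x_k` and `e = x_{k+1} - x̄`, positive
semidefiniteness of `W_k` at `d + e` gives `⟨W_k d, e⟩ + ½‖d‖²_{W_k} ≥ -½‖e‖²_{W_k}`, and
`‖e‖²_{W_k} ≤ λ_max ‖e‖²`.
-/

variable {ι : Type*} [Fintype ι]

def IsSubgradientAt (f : (ι → ℝ) → ℝ) (v q : ι → ℝ) : Prop :=
  ∀ z, f z ≥ f v + q ⬝ᵥ (z - v)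

lemma IsSubgradientAt.inv_smul_of_const_mul {f : (ι → ℝ) → ℝ} {γ : ℝ} (hγ : 0 < γ)
    {v q : ι → ℝ} (hq : IsSubgradientAt (fun z => γ * f z) v q) :
    IsSubgradientAt f v (γ⁻¹ • q) := by
  intro z
  have h := hq z
  rw [smul_dotProduct, smul_eq_mul, ge_iff_le, ← mul_le_mul_iff_right₀ hγ]
  field_simp
  linarith

lemma bregman_const_mul_ge {f : (ι → ℝ) → ℝ} {α γ : ℝ}
    (hstrong : ∀ u v q, IsSubgradientAt f v q →
      f u - f v - q ⬝ᵥ (u - v) ≥ (α / 2) * ((u - v) ⬝ᵥ (u - v)))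
    (hγ : 0 < γ) {v q : ι → ℝ} (hq : IsSubgradientAt (fun z => γ * f z) v q) (u : ι → ℝ) :
    γ * f u - γ * f v - q ⬝ᵥ (u - v) ≥ (γ * α / 2) * ((u - v) ⬝ᵥ (u - v)) := by
  have h := hstrong u v _ (hq.inv_smul_of_const_mul hγ)
  rw [smul_dotProduct, smul_eq_mul, ge_iff_le, ← mul_le_mul_iff_right₀ hγ] at h
  field_simp at h
  linarith

section QuadraticForm

variable {R : Type*} [CommRing R] {W : Matrix ι ι R}

lemma Matrix.IsSymm.mulVec_dotProduct_comm_s18 (hW : W.IsSymm) (u v : ι → R) :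
    W *ᵥ u ⬝ᵥ v = W *ᵥ v ⬝ᵥ u := by
  rw [dotProduct_comm, dotProduct_mulVec, ← mulVec_transpose, hW.eq]

lemma Matrix.IsSymm.mulVec_add_dotProduct_add (hW : W.IsSymm) (u v : ι → R) :
    W *ᵥ (u + v) ⬝ᵥ (u + v) = W *ᵥ u ⬝ᵥ u + 2 * (W *ᵥ u ⬝ᵥ v) + W *ᵥ v ⬝ᵥ v := by
  rw [mulVec_add, add_dotProduct, dotProduct_add, dotProduct_add, hW.mulVec_dotProduct_comm_s18 v u]
  ring

lemma Matrix.IsSymm.neg_mulVec_dotProduct_self_le [LinearOrder R] [IsOrderedRing R]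
    (hW : W.IsSymm) (hpsd : ∀ v, 0 ≤ W *ᵥ v ⬝ᵥ v) (u v : ι → R) :
    -(W *ᵥ v ⬝ᵥ v) ≤ W *ᵥ u ⬝ᵥ u + 2 * (W *ᵥ u ⬝ᵥ v) := by
  have h := hpsd (u + v)
  rw [hW.mulVec_add_dotProduct_add] at h
  rw [neg_le_iff_add_nonneg]
  exact h

end QuadraticForm

lemma dotProduct_self_pos_of_ne {u v : ι → ℝ} (h : u ≠ v) : 0 < (u - v) ⬝ᵥ (u - v) := by
  simpa using dotProduct_star_self_pos_iff.mpr (sub_ne_zero.mpr h)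

theorem stmt_18_general (m : ℕ) (f : (Fin m → ℝ) → ℝ) (α : ℝ) (hα : 0 < α)
    (hstrong : ∀ (u v q : Fin m → ℝ),
      (∀ z : Fin m → ℝ, f z ≥ f v + q ⬝ᵥ (z - v)) →
      f u - f v - q ⬝ᵥ (u - v) ≥ (α/2) * ((u - v) ⬝ᵥ (u - v)))
    (γ : ℝ) (hγ : 0 < γ)
    (Wk : Matrix (Fin m) (Fin m) ℝ) (hsym : Wk.IsSymm)
    (hpsd : ∀ v : Fin m → ℝ, 0 ≤ Wk.mulVec v ⬝ᵥ v)
    (lmax : ℝ)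
    (hbound : ∀ v : Fin m → ℝ, Wk.mulVec v ⬝ᵥ v ≤ lmax * (v ⬝ᵥ v))
    (xk xk1 xbar qk1 : Fin m → ℝ)
    (hq : ∀ z : Fin m → ℝ, γ * f z ≥ γ * f xk1 + qk1 ⬝ᵥ (z - xk1))
    (V : ℝ)
    (hV : V = (γ * f xbar - γ * f xk1 - qk1 ⬝ᵥ (xbar - xk1))
      + Wk.mulVec (xk1 - xk) ⬝ᵥ (xk1 - xbar)
      + (1/2) * (Wk.mulVec (xk1 - xk) ⬝ᵥ (xk1 - xk))) :
    V ≥ ((γ * α - lmax)/2) * ((xk1 - xbar) ⬝ᵥ (xk1 - xbar)) ∧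
      (γ > lmax / α → xk1 ≠ xbar → 0 < V) := by
  have hbregman := bregman_const_mul_ge hstrong hγ hq xbar
  have hswap : (xbar - xk1) ⬝ᵥ (xbar - xk1) = (xk1 - xbar) ⬝ᵥ (xk1 - xbar) := by
    rw [← neg_sub xk1 xbar, neg_dotProduct, dotProduct_neg, neg_neg]
  have hcross := hsym.neg_mulVec_dotProduct_self_le hpsd (xk1 - xk) (xk1 - xbar)
  have hlower : V ≥ ((γ * α - lmax)/2) * ((xk1 - xbar) ⬝ᵥ (xk1 - xbar)) := by
    rw [hswap] at hbregman
    linarith [hbound (xk1 - xbar)]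
  refine ⟨hlower, fun hγα hne => ?_⟩
  have hcoef : 0 < γ * α - lmax := by
    rw [gt_iff_lt, div_lt_iff₀ hα] at hγα
    linarith
  calc 0 < ((γ * α - lmax)/2) * ((xk1 - xbar) ⬝ᵥ (xk1 - xbar)) :=
        mul_pos (half_pos hcoef) (dotProduct_self_pos_of_ne hne)
    _ ≤ V := hlower

/-- Lower bound for the stochastic Lyapunov function. -/
theorem stmt_18 (m : ℕ) (f : (Fin m → ℝ) → ℝ) (α : ℝ) (hα : 0 < α)
    (hstrong : ∀ (u v q : Fin m → ℝ),
      (∀ z : Fin m → ℝ, f z ≥ f v + q ⬝ᵥ (z - v)) →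
      f u - f v - q ⬝ᵥ (u - v) ≥ (α/2) * ((u - v) ⬝ᵥ (u - v)))
    (γ : ℝ) (hγ : 0 < γ)
    (Wk : Matrix (Fin m) (Fin m) ℝ) (hsym : Wk.IsSymm)
    (hpsd : ∀ v : Fin m → ℝ, 0 ≤ Wk.mulVec v ⬝ᵥ v)
    (lmax : ℝ) (hlmax0 : 0 < lmax) (hlmax1 : lmax ≤ 1)
    (hbound : ∀ v : Fin m → ℝ, Wk.mulVec v ⬝ᵥ v ≤ lmax * (v ⬝ᵥ v))
    (xk xk1 xbar qk1 : Fin m → ℝ)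
    (hq : ∀ z : Fin m → ℝ, γ * f z ≥ γ * f xk1 + qk1 ⬝ᵥ (z - xk1))
    (V : ℝ)
    (hV : V = (γ * f xbar - γ * f xk1 - qk1 ⬝ᵥ (xbar - xk1))
      + Wk.mulVec (xk1 - xk) ⬝ᵥ (xk1 - xbar)
      + (1/2) * (Wk.mulVec (xk1 - xk) ⬝ᵥ (xk1 - xk))) :
    V ≥ ((γ * α - lmax)/2) * ((xk1 - xbar) ⬝ᵥ (xk1 - xbar)) ∧
      (γ > lmax / α → xk1 ≠ xbar → 0 < V) :=
  stmt_18_general m f α hα hstrong γ hγ Wk hsym hpsd lmax hbound xk xk1 xbar qk1 hq V hV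
end
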